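/- arXiv:2108.00855 — 2 statements merged into one kernel-verified Lean document; each statement's English description precedes it below -/
import Mathlib

section
/- Let p(u₁,u₂) be a smooth, strictly positive, integrable stationary density and γ > 0, ω ∈ ℝ. Define σ₁²(u₁,u₂) = (2/p(u₁,u₂)) ∫_{-∞}^{u₁} (−γ s − ω u₂) p(s,u₂) ds and σ₂²(u₁,u₂) = (2/p(u₁,u₂)) ∫_{-∞}^{u₂} (−γ s + ω u₁) p(u₁,s) ds. Then p satisfies the stationary Fokker–Planck equation ∂²_{u₁}(σ₁² p) + ∂²_{u₂}(σ₂² p) = 2 ∂_{u₁}((−γ u₁ − ω u₂) p) + 2 ∂_{u₂}((ω u₁ − γ u₂) p). -/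
open MeasureTheory

lemma deriv_integral_Iio (g : ℝ → ℝ) (hg : Integrable g) (hgc : Continuous g) (x : ℝ) :
    deriv (fun y => ∫ s in Set.Iio y, g s) x = g x := by
  have hF : (fun y => ∫ s in Set.Iio y, g s)
      = fun y => (∫ s in (0:ℝ)..y, g s) + ∫ s in Set.Iic (0:ℝ), g s := by
    funext y
    rw [← integral_Iic_eq_integral_Iio]
    have h := intervalIntegral.integral_Iic_sub_Iic (f := g) (μ := volume)
      (a := 0) (b := y) hg.integrableOn hg.integrableOn
    linarith
  rw [hF]
  have h1 : HasDerivAt (fun y => ∫ s in (0:ℝ)..y, g s) (g x) x :=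
    intervalIntegral.integral_hasDerivAt_right hg.intervalIntegrable
      hg.aestronglyMeasurable.stronglyMeasurableAtFilter hgc.continuousAt
  exact ((h1.add_const _).deriv)

/-- Proposition 2: with drift b = (−γu₁−ωu₂, ωu₁−γu₂) and the diagonal
multiplicative-noise coefficients defined by the displayed integral formulae,
the prescribed density p satisfies the stationary Fokker–Planck equation
∂²_{u₁}(σ₁²p) + ∂²_{u₂}(σ₂²p) = 2∂_{u₁}((−γu₁−ωu₂)p) + 2∂_{u₂}((ωu₁−γu₂)p). -/
theorem multiplicative_noise_stationary_FokkerPlanck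
    (γ ω : ℝ) (hγ : 0 < γ)
    (p : ℝ → ℝ → ℝ)
    (hp_smooth : ContDiff ℝ (⊤ : ℕ∞) (fun q : ℝ × ℝ => p q.1 q.2))
    (hp_pos : ∀ u₁ u₂, 0 < p u₁ u₂)
    (hp_int : Integrable (fun q : ℝ × ℝ => p q.1 q.2))
    (hp_int1 : ∀ u₂, Integrable (fun s : ℝ => (|s| + 1) * p s u₂))
    (hp_int2 : ∀ u₁, Integrable (fun s : ℝ => (|s| + 1) * p u₁ s))
    (σ₁sq σ₂sq : ℝ → ℝ → ℝ)
    (hσ₁ : ∀ u₁ u₂, σ₁sq u₁ u₂ =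
      (2 / p u₁ u₂) * ∫ s in Set.Iio u₁, (-γ * s - ω * u₂) * p s u₂)
    (hσ₂ : ∀ u₁ u₂, σ₂sq u₁ u₂ =
      (2 / p u₁ u₂) * ∫ s in Set.Iio u₂, (-γ * s + ω * u₁) * p u₁ s) :
    ∀ u₁ u₂ : ℝ,
      deriv (deriv (fun x => σ₁sq x u₂ * p x u₂)) u₁ +
        deriv (deriv (fun y => σ₂sq u₁ y * p u₁ y)) u₂ =
      2 * deriv (fun x => (-γ * x - ω * u₂) * p x u₂) u₁ +
        2 * deriv (fun y => (ω * u₁ - γ * y) * p u₁ y) u₂ := by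
  intro u₁ u₂
  -- continuity/smoothness of sections of p
  have hp1 : ContDiff ℝ (⊤ : ℕ∞) (fun x => p x u₂) :=
    hp_smooth.comp (contDiff_id.prodMk contDiff_const)
  have hp2 : ContDiff ℝ (⊤ : ℕ∞) (fun y => p u₁ y) :=
    hp_smooth.comp (contDiff_const.prodMk contDiff_id)
  set g₁ : ℝ → ℝ := fun s => (-γ * s - ω * u₂) * p s u₂ with hg₁def
  set g₂ : ℝ → ℝ := fun s => (-γ * s + ω * u₁) * p u₁ s with hg₂def
  have hg₁c : Continuous g₁ := by
    exact (Continuous.sub (continuous_const.mul continuous_id) continuous_const).mul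
      hp1.continuous
  have hg₂c : Continuous g₂ := by
    exact (Continuous.add (continuous_const.mul continuous_id) continuous_const).mul
      hp2.continuous
  have hg₁i : Integrable g₁ := by
    refine (hp_int1 u₂).const_mul (γ + |ω * u₂|) |>.mono
      hg₁c.aestronglyMeasurable ?_
    filter_upwards with s
    have hps := (hp_pos s u₂).le
    have : |(-γ * s - ω * u₂)| ≤ (γ + |ω * u₂|) * (|s| + 1) := by
      have := abs_sub (-γ * s) (ω * u₂)
      calc |(-γ * s - ω * u₂)| ≤ |(-γ * s)| + |ω * u₂| := abs_sub _ _
        _ = γ * |s| + |ω * u₂| := by rw [abs_mul, abs_neg, abs_of_pos hγ]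
        _ ≤ (γ + |ω * u₂|) * (|s| + 1) := by nlinarith [abs_nonneg s, abs_nonneg (ω * u₂)]
    calc ‖g₁ s‖ = |(-γ * s - ω * u₂)| * p s u₂ := by
          simp [hg₁def, abs_mul, abs_of_pos (hp_pos s u₂)]
      _ ≤ (γ + |ω * u₂|) * (|s| + 1) * p s u₂ := by
          exact mul_le_mul_of_nonneg_right this hps
      _ ≤ ‖(γ + |ω * u₂|) * ((|s| + 1) * p s u₂)‖ := by
          rw [Real.norm_eq_abs]; rw [mul_assoc]; exact le_abs_self _
  have hg₂i : Integrable g₂ := by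
    refine (hp_int2 u₁).const_mul (γ + |ω * u₁|) |>.mono
      hg₂c.aestronglyMeasurable ?_
    filter_upwards with s
    have hps := (hp_pos u₁ s).le
    have : |(-γ * s + ω * u₁)| ≤ (γ + |ω * u₁|) * (|s| + 1) := by
      calc |(-γ * s + ω * u₁)| ≤ |(-γ * s)| + |ω * u₁| := abs_add_le _ _
        _ = γ * |s| + |ω * u₁| := by rw [abs_mul, abs_neg, abs_of_pos hγ]
        _ ≤ (γ + |ω * u₁|) * (|s| + 1) := by nlinarith [abs_nonneg s, abs_nonneg (ω * u₁)]
    calc ‖g₂ s‖ = |(-γ * s + ω * u₁)| * p u₁ s := by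
          simp [hg₂def, abs_mul, abs_of_pos (hp_pos u₁ s)]
      _ ≤ (γ + |ω * u₁|) * (|s| + 1) * p u₁ s := by
          exact mul_le_mul_of_nonneg_right this hps
      _ ≤ ‖(γ + |ω * u₁|) * ((|s| + 1) * p u₁ s)‖ := by
          rw [Real.norm_eq_abs]; rw [mul_assoc]; exact le_abs_self _
  -- rewrite σ² * p as twice the integral
  have h1 : (fun x => σ₁sq x u₂ * p x u₂) = fun x => 2 * ∫ s in Set.Iio x, g₁ s := by
    funext x
    rw [hσ₁, div_mul_eq_mul_div, div_mul_cancel₀ _ (hp_pos x u₂).ne']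
  have h2 : (fun y => σ₂sq u₁ y * p u₁ y) = fun y => 2 * ∫ s in Set.Iio y, g₂ s := by
    funext y
    rw [hσ₂, div_mul_eq_mul_div, div_mul_cancel₀ _ (hp_pos u₁ y).ne']
  have hd1 : deriv (fun x => σ₁sq x u₂ * p x u₂) = fun x => 2 * g₁ x := by
    rw [h1]; funext x
    rw [deriv_const_mul]
    · rw [deriv_integral_Iio g₁ hg₁i hg₁c]
    · have : HasDerivAt (fun y => ∫ s in Set.Iio y, g₁ s) (g₁ x) x := by
        have hF : (fun y => ∫ s in Set.Iio y, g₁ s)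
            = fun y => (∫ s in (0:ℝ)..y, g₁ s) + ∫ s in Set.Iic (0:ℝ), g₁ s := by
          funext y
          rw [← integral_Iic_eq_integral_Iio]
          have h := intervalIntegral.integral_Iic_sub_Iic (f := g₁) (μ := volume)
            (a := 0) (b := y) hg₁i.integrableOn hg₁i.integrableOn
          linarith
        rw [hF]
        exact (intervalIntegral.integral_hasDerivAt_right hg₁i.intervalIntegrable
          hg₁i.aestronglyMeasurable.stronglyMeasurableAtFilter hg₁c.continuousAt).add_const _
      exact this.differentiableAt
  have hd2 : deriv (fun y => σ₂sq u₁ y * p u₁ y) = fun y => 2 * g₂ y := by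
    rw [h2]; funext x
    rw [deriv_const_mul]
    · rw [deriv_integral_Iio g₂ hg₂i hg₂c]
    · have : HasDerivAt (fun y => ∫ s in Set.Iio y, g₂ s) (g₂ x) x := by
        have hF : (fun y => ∫ s in Set.Iio y, g₂ s)
            = fun y => (∫ s in (0:ℝ)..y, g₂ s) + ∫ s in Set.Iic (0:ℝ), g₂ s := by
          funext y
          rw [← integral_Iic_eq_integral_Iio]
          have h := intervalIntegral.integral_Iic_sub_Iic (f := g₂) (μ := volume)
            (a := 0) (b := y) hg₂i.integrableOn hg₂i.integrableOn
          linarith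
        rw [hF]
        exact (intervalIntegral.integral_hasDerivAt_right hg₂i.intervalIntegrable
          hg₂i.aestronglyMeasurable.stronglyMeasurableAtFilter hg₂c.continuousAt).add_const _
      exact this.differentiableAt
  rw [hd1, hd2]
  have hdiff1 : DifferentiableAt ℝ g₁ u₁ := by
    apply DifferentiableAt.mul
    · exact (differentiableAt_id.const_mul _).sub (differentiableAt_const _)
    · exact (hp1.differentiable (by simp)).differentiableAt
  have hdiff2 : DifferentiableAt ℝ g₂ u₂ := by
    apply DifferentiableAt.mul
    · exact (differentiableAt_id.const_mul _).add (differentiableAt_const _)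
    · exact (hp2.differentiable (by simp)).differentiableAt
  rw [deriv_const_mul 2 hdiff1, deriv_const_mul 2 hdiff2]
  have e2 : (fun y => (ω * u₁ - γ * y) * p u₁ y) = g₂ := by
    funext y; simp only [hg₂def]; ring
  rw [e2]
end

section
/- Let p be a smooth strictly positive density on ℝ with mean μ and γ > 0, f = γμ. Define σ²(x) = (−2γ/p(x)) ∫_{-∞}^x (s − f/γ) p(s) ds. Then p is a stationary solution of the Fokker–Planck equation ½ (σ²(x) p(x))'' = ((−γx + f) p(x))' associated with the SDE du = (−γu + f) dt + σ(u) dW. -/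
open MeasureTheory

/-- Proposition 4 (one-dimensional case): with drift −γx + f, f = γμ and
σ²(x) = (−2γ/p(x)) ∫_{-∞}^x (s − f/γ) p(s) ds, the prescribed density p is a
stationary solution of the Fokker–Planck equation ½(σ²p)'' = ((−γx+f)p)'. -/
theorem multiplicative_noise_stationary_FP_1D
    (γ f μ : ℝ) (hγ : 0 < γ) (hf : f = γ * μ)
    (p : ℝ → ℝ) (hp_smooth : ContDiff ℝ (⊤ : ℕ∞) p) (hp_pos : ∀ x, 0 < p x)
    (hp_int : Integrable p) (hp_density : ∫ x, p x = 1)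
    (h_mom1 : Integrable (fun s => s * p s)) (h_mean : ∫ s, s * p s = μ)
    (σsq : ℝ → ℝ)
    (hσ : ∀ x, σsq x = (-2 * γ / p x) * ∫ s in Set.Iio x, (s - f / γ) * p s) :
    ∀ x : ℝ,
      (1 / 2) * deriv (deriv (fun y => σsq y * p y)) x =
        deriv (fun y => (-γ * y + f) * p y) x := by
  intro x
  set g : ℝ → ℝ := fun s => (s - μ) * p s with hg
  have hμ : f / γ = μ := by rw [hf]; field_simp
  have g_int : Integrable g := by
    have : g = fun s => s * p s - μ * p s := by funext s; simp only [hg]; ring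
    rw [this]
    exact h_mom1.sub (hp_int.const_mul μ)
  have g_cont : Continuous g :=
    (continuous_id.sub continuous_const).mul hp_smooth.continuous
  set F : ℝ → ℝ := fun y => ∫ s in Set.Iio y, g s with hF
  -- σsq y * p y = -2γ * F y
  have key : (fun y => σsq y * p y) = fun y => (-2 * γ) * F y := by
    funext y
    rw [hσ y, hμ]
    field_simp [(hp_pos y).ne']
    rfl
  -- F has derivative g y at each y
  have hFd : ∀ y : ℝ, HasDerivAt F (g y) y := by
    intro y
    have h1 : F = fun z => F 0 + ∫ s in (0:ℝ)..z, g s := by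
      funext z
      rw [hF]
      simp only
      rw [← intervalIntegral.integral_Iic_sub_Iic (g_int.integrableOn) (g_int.integrableOn),
        integral_Iic_eq_integral_Iio, integral_Iic_eq_integral_Iio]
      ring
    rw [h1]
    exact ((intervalIntegral.integral_hasDerivAt_right
      g_int.intervalIntegrable
      g_cont.aestronglyMeasurable.stronglyMeasurableAtFilter
      g_cont.continuousAt).const_add (F 0))
  -- first derivative
  have hderiv1 : deriv (fun y => σsq y * p y) = fun y => 2 * ((-γ * y + f) * p y) := by
    funext y
    rw [key]
    rw [deriv_const_mul_field]
    rw [(hFd y).deriv]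
    simp only [hg, hf]
    ring
  rw [hderiv1, deriv_const_mul_field]
  ring
end
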